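/- Lipschitz continuity of the martingale differences in the quantile level (inequality (eq:xitautaupri)): for every 1 ≤ i ≤ p, every k ≥ 1 and all τ, τ' ∈ [τ0, τ1], almost surely |ξ_{i,k+1}(τ) − ξ_{i,k+1}(τ')| ≤ [1 + (2a)^{−1} (1−β)^{−1} k] |τ − τ'|. -/

import Mathlib

open MeasureTheory ProbabilityTheory Real

/-- The piecewise-linear smoothing of the indicator function. -/
noncomputable def gfun (x : ℝ) : ℝ :=
  if 1 ≤ x then 1 else if -1 ≤ x then (x + 1) / 2 else 0

/-- Rescaled smoothing function `g_h(x) = g(x/h)`. -/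
noncomputable def gsm (h x : ℝ) : ℝ := gfun (x / h)

/-- Learning rate `γ_k = c_γ k^{-β}`. -/
noncomputable def gam (cγ β : ℝ) (k : ℕ) : ℝ := cγ * (k : ℝ) ^ (-β)

/-- The σ-field generated by `X_1, …, X_k`. -/
def sigmaUpTo {Ω : Type} (X : ℕ → Ω → ℝ) (k : ℕ) : MeasurableSpace Ω :=
  ⨆ j ∈ Finset.Icc 1 k, MeasurableSpace.comap (X j) inferInstance

/-!
For `τ' ≤ τ` put `D_n = Y_n(τ) - Y_n(τ')`. Since `g_h` is nondecreasing and
`1/(2h)`-Lipschitz and `a ≥ 1/2`, the map `y ↦ y - γ g_{aγ}(y - x)` is nondecreasing, so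
`0 ≤ D_{n+1} ≤ D_n + γ_n (τ - τ')`; summing,
`0 ≤ D_k ≤ (τ - τ') ∑_{j<k} γ_j ≤ (τ - τ') (1-β)⁻¹ k γ_k`.
Consequently `Z_{k+1}(τ) - Z_{k+1}(τ')` lies, surely, between `τ - τ'` and `(1 - C)(τ - τ')`
with `C = (2a)⁻¹ (1-β)⁻¹ k`. Its conditional expectation lies in the same interval, and
`ξ(τ) - ξ(τ')` is the difference of the two, hence bounded by the length `C |τ - τ'|`.
-/

open Finset Set

lemma gfun_monotone : Monotone gfun := by
  intro x x' h
  unfold gfun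
  split_ifs <;> linarith

lemma gfun_sub_le_half {x x' : ℝ} (h : x' ≤ x) : gfun x - gfun x' ≤ (x - x') / 2 := by
  unfold gfun
  split_ifs <;> linarith

lemma abs_gfun_le_one (x : ℝ) : |gfun x| ≤ 1 := by
  unfold gfun
  split_ifs <;> rw [abs_le] <;> constructor <;> linarith

lemma measurable_gsm (h : ℝ) : Measurable (gsm h) :=
  gfun_monotone.measurable.comp (measurable_id.div_const h)

lemma gsm_monotone {h : ℝ} (hh : 0 ≤ h) : Monotone (gsm h) :=
  fun _ _ hx => gfun_monotone (div_le_div_of_nonneg_right hx hh)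

lemma gsm_sub_le {h x x' : ℝ} (hh : 0 < h) (hx : x' ≤ x) :
    gsm h x - gsm h x' ≤ (x - x') / (2 * h) := by
  calc gsm h x - gsm h x' ≤ (x / h - x' / h) / 2 :=
        gfun_sub_le_half (div_le_div_of_nonneg_right hx hh.le)
    _ = (x - x') / (2 * h) := by field_simp

lemma integrable_gsm_comp {Ω : Type*} [MeasurableSpace Ω] {μ : Measure Ω} [IsFiniteMeasure μ]
    (h : ℝ) {f : Ω → ℝ} (hf : Measurable f) : Integrable (fun ω => gsm h (f ω)) μ :=
  Integrable.of_bound ((measurable_gsm h).comp hf).aestronglyMeasurable 1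
    (ae_of_all _ fun _ => abs_gfun_le_one _)

lemma mul_rpow_sub_one_le_rpow_sub_rpow {x p : ℝ} (hx : 1 ≤ x) (hp0 : 0 ≤ p) (hp1 : p ≤ 1) :
    p * x ^ (p - 1) ≤ x ^ p - (x - 1) ^ p := by
  have hx0 : 0 < x := by linarith
  have hbern : (1 + -x⁻¹) ^ p ≤ 1 + p * -x⁻¹ :=
    rpow_one_add_le_one_add_mul_self (by linarith [inv_le_one_of_one_le₀ hx]) hp0 hp1
  have hfactor : (x - 1) ^ p = x ^ p * (1 + -x⁻¹) ^ p := by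
    rw [← mul_rpow hx0.le (by linarith [inv_le_one_of_one_le₀ hx])]
    field_simp
    ring_nf
  calc p * x ^ (p - 1) = x ^ p - x ^ p * (1 + p * -x⁻¹) := by
        rw [rpow_sub_one hx0.ne']; field_simp; ring
    _ ≤ x ^ p - (x - 1) ^ p := by
        rw [hfactor]; gcongr

lemma sum_Icc_rpow_neg_le {β : ℝ} (hβ0 : 0 ≤ β) (hβ1 : β < 1) (m : ℕ) :
    ∑ j ∈ Icc 1 m, (j : ℝ) ^ (-β) ≤ (1 - β)⁻¹ * (m : ℝ) ^ (1 - β) := by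
  induction m with
  | zero => simp [zero_rpow (by linarith : 1 - β ≠ 0)]
  | succ m ih =>
    have hstep := mul_rpow_sub_one_le_rpow_sub_rpow (x := (m : ℝ) + 1)
      (by linarith [m.cast_nonneg (α := ℝ)]) (by linarith : 0 ≤ 1 - β) (by linarith)
    rw [show 1 - β - 1 = -β by ring, add_sub_cancel_right] at hstep
    rw [sum_Icc_succ_top (by omega), Nat.cast_succ]
    have h1β : 0 < 1 - β := by linarith
    calc _ ≤ (1 - β)⁻¹ * (m : ℝ) ^ (1 - β) + ((m : ℝ) + 1) ^ (-β) := by gcongr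
      _ ≤ (1 - β)⁻¹ * ((m : ℝ) + 1) ^ (1 - β) := by
        have := (le_inv_mul_iff₀ h1β).2 hstep
        rw [mul_sub] at this
        linarith

lemma sum_Ico_gam_le {cγ β : ℝ} (hcγ : 0 ≤ cγ) (hβ0 : 0 ≤ β) (hβ1 : β < 1) (k : ℕ) :
    ∑ j ∈ Ico 1 k, gam cγ β j ≤ (1 - β)⁻¹ * k * gam cγ β k := by
  have hpow : (k : ℝ) ^ (1 - β) = k * (k : ℝ) ^ (-β) := by
    rw [sub_eq_add_neg, rpow_add' k.cast_nonneg (by linarith), rpow_one]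
  calc ∑ j ∈ Ico 1 k, gam cγ β j ≤ ∑ j ∈ Icc 1 k, gam cγ β j :=
        sum_le_sum_of_subset_of_nonneg Ico_subset_Icc_self
          fun j _ _ => mul_nonneg hcγ (rpow_nonneg j.cast_nonneg _)
    _ = cγ * ∑ j ∈ Icc 1 k, (j : ℝ) ^ (-β) := (mul_sum ..).symm
    _ ≤ cγ * ((1 - β)⁻¹ * (k : ℝ) ^ (1 - β)) := by
        gcongr; exact sum_Icc_rpow_neg_le hβ0 hβ1 k
    _ = (1 - β)⁻¹ * k * gam cγ β k := by rw [hpow, gam]; ring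

noncomputable def sgdStep (γ a τ x y : ℝ) : ℝ := y + γ * (τ - gsm (a * γ) (y - x))

lemma sgdStep_mono {γ a τ τ' x y y' : ℝ} (hγ : 0 < γ) (ha : 1 / 2 ≤ a) (hτ : τ' ≤ τ)
    (hy : y' ≤ y) : sgdStep γ a τ' x y' ≤ sgdStep γ a τ x y := by
  have hgap := gsm_sub_le (mul_pos (by linarith : (0 : ℝ) < a) hγ) (sub_le_sub_right hy x)
  rw [sub_sub_sub_cancel_right] at hgap
  have hcontract : γ * ((y - y') / (2 * (a * γ))) ≤ y - y' := by
    rw [show γ * ((y - y') / (2 * (a * γ))) = (y - y') / (2 * a) by field_simp]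
    exact div_le_self (by linarith) (by linarith)
  unfold sgdStep
  nlinarith

lemma sgdStep_sub_le {γ a τ τ' x y y' : ℝ} (hγ : 0 ≤ γ) (ha : 0 ≤ a) (hy : y' ≤ y) :
    sgdStep γ a τ x y - sgdStep γ a τ' x y' ≤ y - y' + γ * (τ - τ') := by
  have hmono := gsm_monotone (mul_nonneg ha hγ) (sub_le_sub_right hy x)
  unfold sgdStep
  nlinarith

lemma sgd_iterate_sub_mem_Icc {γ : ℕ → ℝ} {a : ℝ} {x : ℕ → ℝ} {Y : ℕ → ℝ → ℝ}
    (hγ : ∀ k, 1 ≤ k → 0 < γ k) (ha : 1 / 2 ≤ a)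
    (h1 : ∀ σ σ', Y 1 σ = Y 1 σ')
    (hrec : ∀ k σ, 1 ≤ k → Y (k + 1) σ = sgdStep (γ k) a σ (x (k + 1)) (Y k σ))
    {τ τ' : ℝ} (hτ : τ' ≤ τ) {n : ℕ} (hn : 1 ≤ n) :
    Y n τ - Y n τ' ∈ Icc 0 ((τ - τ') * ∑ j ∈ Ico 1 n, γ j) := by
  induction n, hn using Nat.le_induction with
  | base => simp [h1 τ τ']
  | succ n hn ih =>
    rw [hrec n τ hn, hrec n τ' hn, sum_Ico_succ_top hn, mul_add]
    refine ⟨sub_nonneg.2 (sgdStep_mono (hγ n hn) ha hτ (sub_nonneg.1 ih.1)), ?_⟩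
    have := sgdStep_sub_le (τ := τ) (τ' := τ') (x := x (n + 1)) (hγ n hn).le
      (by linarith : (0 : ℝ) ≤ a) (sub_nonneg.1 ih.1)
    linarith [ih.2]

lemma sgd_loss_sub_mem_uIcc {cγ β a : ℝ} {x : ℕ → ℝ} {Y : ℕ → ℝ → ℝ}
    (hcγ : 0 < cγ) (hβ0 : 0 ≤ β) (hβ1 : β < 1) (ha : 1 / 2 ≤ a) (h1 : ∀ σ σ', Y 1 σ = Y 1 σ')
    (hrec : ∀ k σ, 1 ≤ k → Y (k + 1) σ = sgdStep (gam cγ β k) a σ (x (k + 1)) (Y k σ))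
    {k : ℕ} (hk : 1 ≤ k) (τ τ' : ℝ) :
    (τ - gsm (a * gam cγ β k) (Y k τ - x (k + 1))) -
        (τ' - gsm (a * gam cγ β k) (Y k τ' - x (k + 1))) ∈
      uIcc (τ - τ') ((τ - τ') - (2 * a)⁻¹ * (1 - β)⁻¹ * k * (τ - τ')) := by
  wlog hτ : τ' ≤ τ generalizing τ τ'
  · have := this τ' τ (le_of_not_ge hτ)
    rw [Set.mem_uIcc] at this ⊢
    rcases this with ⟨hlo, hhi⟩ | ⟨hlo, hhi⟩
    · right; constructor <;> linarith
    · left; constructor <;> linarith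
  have hγ : ∀ j, 1 ≤ j → 0 < gam cγ β j := fun j hj =>
    mul_pos hcγ (rpow_pos_of_pos (by exact_mod_cast hj) _)
  have hh : 0 < a * gam cγ β k := mul_pos (by linarith) (hγ k hk)
  obtain ⟨hY0, hYle⟩ := sgd_iterate_sub_mem_Icc hγ ha h1 hrec hτ hk
  have hmono : Y k τ' - x (k + 1) ≤ Y k τ - x (k + 1) := by linarith
  have hgap := gsm_sub_le hh hmono
  rw [sub_sub_sub_cancel_right] at hgap
  have hgap' : (Y k τ - Y k τ') / (2 * (a * gam cγ β k)) ≤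
      (2 * a)⁻¹ * (1 - β)⁻¹ * k * (τ - τ') := by
    rw [div_le_iff₀ (by positivity)]
    calc Y k τ - Y k τ' ≤ (τ - τ') * ((1 - β)⁻¹ * k * gam cγ β k) :=
          hYle.trans (by gcongr; exact sum_Ico_gam_le hcγ.le hβ0 hβ1 k)
      _ = _ := by field_simp
  rw [Set.mem_uIcc]
  right
  constructor
  · linarith
  · linarith [gsm_monotone hh.le hmono]

lemma measurable_sgd_iterate {Ω : Type*} [MeasurableSpace Ω] {γ : ℕ → ℝ} {a τ : ℝ}
    {X Y : ℕ → Ω → ℝ} (hX : ∀ k, Measurable (X k)) (h1 : Measurable (Y 1))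
    (hrec : ∀ k ω, 1 ≤ k → Y (k + 1) ω = sgdStep (γ k) a τ (X (k + 1) ω) (Y k ω))
    {n : ℕ} (hn : 1 ≤ n) : Measurable (Y n) := by
  induction n, hn using Nat.le_induction with
  | base => exact h1
  | succ n hn ih =>
    rw [show Y (n + 1) = fun ω => sgdStep (γ n) a τ (X (n + 1) ω) (Y n ω) from
      funext fun ω => hrec n ω hn]
    exact ih.add (measurable_const.mul
      (measurable_const.sub ((measurable_gsm _).comp (ih.sub (hX _)))))

section CondExp

variable {Ω : Type*} {m m0 : MeasurableSpace Ω} {μ : Measure Ω} [IsFiniteMeasure μ]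

lemma ae_abs_sub_condExp_le_of_mem_uIcc (hm : m ≤ m0) {W : Ω → ℝ} (hW : Integrable W μ)
    {a b : ℝ} (hab : ∀ᵐ ω ∂μ, W ω ∈ uIcc a b) :
    ∀ᵐ ω ∂μ, |W ω - μ[W|m] ω| ≤ |b - a| := by
  have hlo := condExp_mono (m := m) (integrable_const (a ⊓ b)) hW (hab.mono fun _ h => h.1)
  have hhi := condExp_mono (m := m) hW (integrable_const (a ⊔ b)) (hab.mono fun _ h => h.2)
  rw [condExp_const hm] at hlo hhi
  filter_upwards [hab, hlo, hhi] with ω hWω hloω hhiω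
  exact abs_sub_le_of_uIcc_subset_uIcc (uIcc_subset_uIcc ⟨hloω, hhiω⟩ hWω)

lemma ae_abs_sub_condExp_sub_sub_condExp_le_of_mem_uIcc (hm : m ≤ m0) {f g : Ω → ℝ}
    (hf : Integrable f μ) (hg : Integrable g μ) {a b : ℝ}
    (hfg : ∀ᵐ ω ∂μ, f ω - g ω ∈ uIcc a b) :
    ∀ᵐ ω ∂μ, |(f ω - μ[f|m] ω) - (g ω - μ[g|m] ω)| ≤ |b - a| := by
  filter_upwards [ae_abs_sub_condExp_le_of_mem_uIcc hm (hf.sub hg) hfg, condExp_sub hf hg m]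
    with ω hω hsub
  rwa [hsub, Pi.sub_apply, Pi.sub_apply, sub_sub_sub_comm] at hω

end CondExp

lemma sigmaUpTo_le {Ω : Type} [mΩ : MeasurableSpace Ω] {X : ℕ → Ω → ℝ}
    (hX : ∀ j, Measurable (X j)) (k : ℕ) : sigmaUpTo X k ≤ mΩ :=
  iSup₂_le fun j _ => (hX j).comap_le

theorem smoothed_sgd_xi_lipschitz_in_tau_general
    (cγ β a : ℝ)
    (hcγ : 0 < cγ) (hβ1 : 1 / 2 < β) (hβ2 : β < 1) (ha : 1 / 2 < a)
    (Ω : Type) [MeasurableSpace Ω] (μ : Measure Ω) [IsProbabilityMeasure μ]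
    (X : ℕ → ℕ → Ω → ℝ) (y : ℕ → ℝ) (Y : ℕ → ℕ → ℝ → Ω → ℝ)
    (hXmeas : ∀ i k, Measurable (X i k))
    -- SGD iterates with deterministic initial value, `max_i |y_i| ≤ c_y`
    (hY1 : ∀ i τ ω, Y i 1 τ ω = y i)
    (hYrec : ∀ i k τ ω, 1 ≤ k → Y i (k + 1) τ ω =
      Y i k τ ω + gam cγ β k * (τ - gsm (a * gam cγ β k) (Y i k τ ω - X i (k + 1) ω)))
    (i k : ℕ) (hk : 1 ≤ k)
    (τ τ' : ℝ) :
    ∀ᵐ ω ∂μ,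
      |((τ - gsm (a * gam cγ β k) (Y i k τ ω - X i (k + 1) ω)) -
          (μ[fun ω' => τ - gsm (a * gam cγ β k) (Y i k τ ω' - X i (k + 1) ω') |
              sigmaUpTo (X i) k]) ω) -
        ((τ' - gsm (a * gam cγ β k) (Y i k τ' ω - X i (k + 1) ω)) -
          (μ[fun ω' => τ' - gsm (a * gam cγ β k) (Y i k τ' ω' - X i (k + 1) ω') |
              sigmaUpTo (X i) k]) ω)| ≤
      (1 + (2 * a)⁻¹ * (1 - β)⁻¹ * (k : ℝ)) * |τ - τ'| := by
  have hmeas (σ : ℝ) : Measurable (Y i k σ) :=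
    measurable_sgd_iterate (Y := fun n => Y i n σ) (hXmeas i)
      ((funext (hY1 i σ)).symm ▸ measurable_const)
      (fun j ω hj => hYrec i j σ ω hj) hk
  have hint (σ : ℝ) :
      Integrable (fun ω => σ - gsm (a * gam cγ β k) (Y i k σ ω - X i (k + 1) ω)) μ :=
    (integrable_const σ).sub (integrable_gsm_comp _ ((hmeas σ).sub (hXmeas i (k + 1))))
  have hgap (ω : Ω) :=
    sgd_loss_sub_mem_uIcc (x := fun j => X i j ω) (Y := fun n σ => Y i n σ ω)
      hcγ (by linarith) hβ2 ha.le (fun σ σ' => by simp only [hY1])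
      (fun j σ hj => hYrec i j σ ω hj) hk τ τ'
  filter_upwards [ae_abs_sub_condExp_sub_sub_condExp_le_of_mem_uIcc
    (sigmaUpTo_le (hXmeas i) k) (hint τ) (hint τ') (ae_of_all _ hgap)] with ω hω
  have hC : 0 ≤ (2 * a)⁻¹ * (1 - β)⁻¹ * (k : ℝ) := by
    have : 0 < 1 - β := by linarith
    positivity
  refine hω.trans ?_
  rw [sub_sub_cancel_left, abs_neg, abs_mul, abs_of_nonneg hC]
  gcongr
  linarith

/-- **Lipschitz continuity of the martingale differences in the quantile level**
(inequality (eq:xitautaupri)): for every `1 ≤ i ≤ p`, every `k ≥ 1` and all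
`τ, τ' ∈ [τ0, τ1]`, almost surely
`|ξ_{i,k+1}(τ) − ξ_{i,k+1}(τ')| ≤ [1 + (2a)⁻¹ (1−β)⁻¹ k] |τ − τ'|`, where
`ξ_{i,k+1}(τ) = Z_{i,k+1}(τ) − E(Z_{i,k+1}(τ) | F_{i,k})` and
`Z_{i,k+1}(τ) = τ − g_{aγ_k}(Y_{i,k}(τ) − X_{i,k+1})`. -/
theorem smoothed_sgd_xi_lipschitz_in_tau
    (τ0 τ1 cγ β a cy : ℝ)
    (hτ0 : 0 < τ0) (hτ01 : τ0 < τ1) (hτ1 : τ1 < 1)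
    (hcγ : 0 < cγ) (hβ1 : 1 / 2 < β) (hβ2 : β < 1) (ha : 1 / 2 < a)
    (p : ℕ) (Ω : Type) [MeasurableSpace Ω] (μ : Measure Ω) [IsProbabilityMeasure μ]
    (X : ℕ → ℕ → Ω → ℝ) (y : ℕ → ℝ) (Y : ℕ → ℕ → ℝ → Ω → ℝ)
    (hXmeas : ∀ i k, Measurable (X i k))
    -- the X_{i,k}, k ≥ 1, are independent and identically distributed
    (hindep : ∀ i, iIndepFun (fun k => X i k) μ)
    (hident : ∀ i k, 1 ≤ k → Measure.map (X i k) μ = Measure.map (X i 1) μ)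
    -- SGD iterates with deterministic initial value, `max_i |y_i| ≤ c_y`
    (hy : ∀ i, 1 ≤ i → i ≤ p → |y i| ≤ cy)
    (hY1 : ∀ i τ ω, Y i 1 τ ω = y i)
    (hYrec : ∀ i k τ ω, 1 ≤ k → Y i (k + 1) τ ω =
      Y i k τ ω + gam cγ β k * (τ - gsm (a * gam cγ β k) (Y i k τ ω - X i (k + 1) ω)))
    (i k : ℕ) (hi1 : 1 ≤ i) (hip : i ≤ p) (hk : 1 ≤ k)
    (τ τ' : ℝ) (hτl : τ0 ≤ τ) (hτu : τ ≤ τ1) (hτ'l : τ0 ≤ τ') (hτ'u : τ' ≤ τ1) :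
    ∀ᵐ ω ∂μ,
      |((τ - gsm (a * gam cγ β k) (Y i k τ ω - X i (k + 1) ω)) -
          (μ[fun ω' => τ - gsm (a * gam cγ β k) (Y i k τ ω' - X i (k + 1) ω') |
              sigmaUpTo (X i) k]) ω) -
        ((τ' - gsm (a * gam cγ β k) (Y i k τ' ω - X i (k + 1) ω)) -
          (μ[fun ω' => τ' - gsm (a * gam cγ β k) (Y i k τ' ω' - X i (k + 1) ω') |
              sigmaUpTo (X i) k]) ω)| ≤
      (1 + (2 * a)⁻¹ * (1 - β)⁻¹ * (k : ℝ)) * |τ - τ'| :=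
  smoothed_sgd_xi_lipschitz_in_tau_general cγ β a hcγ hβ1 hβ2 ha Ω μ X y Y hXmeas hY1 hYrec i k hk τ
    τ'
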